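/- Theorem 4 (Theorem 5.2: fixed-share tracking bound). Let T₂ ≥ 2, η > 0 and δ ∈ (0,1). For every action sequence (i_1,…,i_{T₂}) ∈ {1,2}^{T₂} that switches at most once (i.e. there exists s with 0 ≤ s ≤ T₂ such that i_t is constant for t ≤ s and constant for t > s), the fixed-share forecaster satisfies Σ_{t=1}^{T₂} ℓ̄_t − Σ_{t=1}^{T₂} ℓ_{i_t,t} ≤ (2/η) ln 2 + (1/η) ln(1/((δ/2)(1−δ)^{T₂−2})) + (η/8) T₂. -/

import Mathlib

/-!
The proof sandwiches the total weight `W_t = α 0 t + α 1 t`. Since the fixed-share step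
redistributes mass without creating any, `W_{t+1}` is the `p_t`-average of
`exp (-η ℓ_{·,t+1})` times `W_t`, and Hoeffding's lemma bounds that average by
`exp (-η ℓ̄_{t+1} + η² / 8)`; hence `log W_T ≤ -η Σ ℓ̄_t + η² T / 8`.
From below, `W_T` is at least the weight of the expert played last. In each round an expert keeps
at least the fraction `1 - δ / 2` of its updated weight, and every expert receives at least `δ / 2`
of the updated weight of any expert, so along a sequence with one switch
`W_T ≥ (δ / 4) (1 - δ / 2)^(T - 1) exp (-η Σ ℓ_{i_t,t})`, which dominates
`(δ / 8) (1 - δ)^(T - 2) exp (-η Σ ℓ_{i_t,t})`. Comparing the two bounds gives the regret bound.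
-/

open Real Finset MeasureTheory ProbabilityTheory

theorem log_sum_mul_exp_le {ι : Type*} [Fintype ι] {p x : ι → ℝ} {a b : ℝ}
    (hp : ∀ j, 0 ≤ p j) (hp1 : ∑ j, p j = 1) (hx : ∀ j, x j ∈ Set.Icc a b) (t : ℝ) :
    log (∑ j, p j * exp (t * x j)) ≤ t * ∑ j, p j * x j + t ^ 2 * (b - a) ^ 2 / 8 := by
  let _ : MeasurableSpace ι := ⊤
  let P : PMF ι := PMF.ofFintype (fun j ↦ ENNReal.ofReal (p j)) (by
    rw [← ENNReal.ofReal_sum_of_nonneg fun j _ ↦ hp j, hp1, ENNReal.ofReal_one])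
  have integral_eq (f : ι → ℝ) : ∫ j, f j ∂P.toMeasure = ∑ j, p j * f j := by
    simp [P, PMF.integral_eq_sum, ENNReal.toReal_ofReal (hp _)]
  have hmgf := (hasSubgaussianMGF_of_mem_Icc (μ := P.toMeasure) (X := x)
    (measurable_of_countable x).aemeasurable (ae_of_all _ hx)).mgf_le t
  set m := ∑ j, p j * x j
  rw [mgf, integral_eq, integral_eq] at hmgf
  have hsplit : ∑ j, p j * exp (t * x j) = exp (t * m) * ∑ j, p j * exp (t * (x j - m)) := by
    rw [mul_sum]
    refine sum_congr rfl fun j _ ↦ ?_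
    rw [mul_sub, exp_sub]
    field_simp
  have hpos : 0 < ∑ j, p j * exp (t * (x j - m)) := by
    obtain ⟨j, -, hj⟩ := exists_lt_of_sum_lt (by simp [hp1] : ∑ _j : ι, (0 : ℝ) < ∑ j, p j)
    exact sum_pos' (fun j _ ↦ by have := hp j; positivity) ⟨j, mem_univ _, by positivity⟩
  rw [hsplit, log_mul (exp_pos _).ne' hpos.ne', log_exp]
  have := (log_le_iff_le_exp hpos).2 hmgf
  have hc : (((‖b - a‖₊ / 2) ^ 2 : NNReal) : ℝ) = (b - a) ^ 2 / 4 := by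
    push_cast
    rw [Real.norm_eq_abs, div_pow, sq_abs]; ring
  rw [hc] at this
  linarith

def SwitchesAtMostOnce {κ : Type*} (T : ℕ) (i : ℕ → κ) : Prop :=
  ∃ s ≤ T, (∀ t1 t2, 1 ≤ t1 → t1 ≤ s → 1 ≤ t2 → t2 ≤ s → i t1 = i t2) ∧
    (∀ t1 t2, s < t1 → t1 ≤ T → s < t2 → t2 ≤ T → i t1 = i t2)

theorem SwitchesAtMostOnce.exists_sum_eq {κ M : Type*} [AddCommMonoid M] {T : ℕ} {i : ℕ → κ}
    (h : SwitchesAtMostOnce T i) (hT : 1 ≤ T) (g : κ → ℕ → M) :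
    ∃ s, 1 ≤ s ∧ s ≤ T ∧
      ∑ t ∈ Icc 1 T, g (i t) t = ∑ t ∈ Ioc 0 s, g (i 1) t + ∑ t ∈ Ioc s T, g (i T) t := by
  obtain ⟨s, hsT, hleft, hright⟩ := h
  -- with the switch at `0` the sequence is constant, and the switch may as well sit at `T`
  obtain ⟨s, hs, hsT, hleft, hright⟩ : ∃ s, 1 ≤ s ∧ s ≤ T ∧
      (∀ t ∈ Ioc 0 s, i t = i 1) ∧ ∀ t ∈ Ioc s T, i t = i T := by
    rcases Nat.eq_zero_or_pos s with rfl | hs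
    · refine ⟨T, hT, le_rfl, fun t ht ↦ ?_, fun t ht ↦ by rw [mem_Ioc] at ht; omega⟩
      rw [mem_Ioc] at ht
      exact hright t 1 ht.1 ht.2 one_pos hT
    · refine ⟨s, hs, hsT, fun t ht ↦ ?_, fun t ht ↦ ?_⟩ <;> rw [mem_Ioc] at ht
      · exact hleft t 1 ht.1 ht.2 le_rfl hs
      · exact hright t T ht.1 ht.2 (ht.1.trans_le ht.2) le_rfl
  refine ⟨s, hs, hsT, ?_⟩
  rw [show Icc 1 T = Ioc 0 T from Icc_add_one_left_eq_Ioc 0 T,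
    ← sum_Ioc_consecutive _ (Nat.zero_le s) hsT]
  congr 1 <;> refine sum_congr rfl fun t ht ↦ ?_
  · rw [hleft t ht]
  · rw [hright t ht]

theorem div_eight_mul_pow_le {δ : ℝ} (hδ0 : 0 ≤ δ) (hδ1 : δ ≤ 1) (T : ℕ) :
    δ / 8 * (1 - δ) ^ (T - 2) ≤ δ / 4 * (1 - δ / 2) ^ (T - 1) := by
  rcases le_or_gt T 1 with hT | hT
  · rw [Nat.sub_eq_zero_of_le hT, Nat.sub_eq_zero_of_le (hT.trans one_le_two)]
    linarith
  · have h1δ : 0 ≤ 1 - δ := by linarith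
    rw [show T - 1 = T - 2 + 1 by omega, pow_succ]
    have hpow : (1 - δ) ^ (T - 2) ≤ (1 - δ / 2) ^ (T - 2) := by gcongr; linarith
    nlinarith [mul_le_mul_of_nonneg_left hpow hδ0,
      mul_nonneg (mul_nonneg hδ0 (pow_nonneg (by linarith : 0 ≤ 1 - δ / 2) (T - 2))) h1δ]

structure IsFixedShare (η δ : ℝ) (l α : Fin 2 → ℕ → ℝ) : Prop where
  init : ∀ c, α c 0 = 1 / 2
  succ : ∀ c t, α c (t + 1) =
    δ / 2 * (α 0 t * exp (-η * l 0 (t + 1)) + α 1 t * exp (-η * l 1 (t + 1)))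
      + (1 - δ) * (α c t * exp (-η * l c (t + 1)))

namespace IsFixedShare

variable {η δ : ℝ} {l α : Fin 2 → ℕ → ℝ}

theorem add_succ (h : IsFixedShare η δ l α) (t : ℕ) :
    α 0 (t + 1) + α 1 (t + 1) =
      α 0 t * exp (-η * l 0 (t + 1)) + α 1 t * exp (-η * l 1 (t + 1)) := by
  rw [h.succ, h.succ]; ring

theorem pos (h : IsFixedShare η δ l α) (hδ0 : 0 ≤ δ) (hδ1 : δ ≤ 1) (c : Fin 2)
    (t : ℕ) : 0 < α c t := by
  induction t generalizing c with
  | zero => rw [h.init]; norm_num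
  | succ t ih =>
    have := ih 0; have := ih 1; have := ih c
    rw [h.succ]
    rcases hδ1.eq_or_lt with rfl | hδ1
    · positivity
    · have : 0 < 1 - δ := by linarith
      positivity

theorem div_two_mul_le_succ (h : IsFixedShare η δ l α) (hδ0 : 0 ≤ δ) (hδ1 : δ ≤ 1)
    (c c' : Fin 2) (t : ℕ) :
    δ / 2 * (α c t * exp (-η * l c (t + 1))) ≤ α c' (t + 1) := by
  have hv (j : Fin 2) : 0 ≤ α j t * exp (-η * l j (t + 1)) :=
    (mul_pos (h.pos hδ0 hδ1 j t) (exp_pos _)).le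
  have := mul_nonneg (sub_nonneg.2 hδ1) (hv c')
  rw [h.succ]
  fin_cases c <;> simp only [Fin.zero_eta, Fin.mk_one] <;> nlinarith [hv 0, hv 1]

theorem one_sub_div_two_mul_le_succ (h : IsFixedShare η δ l α) (hδ0 : 0 ≤ δ) (hδ1 : δ ≤ 1)
    (c : Fin 2) (t : ℕ) :
    (1 - δ / 2) * (α c t * exp (-η * l c (t + 1))) ≤ α c (t + 1) := by
  have hv (j : Fin 2) : 0 ≤ α j t * exp (-η * l j (t + 1)) :=
    (mul_pos (h.pos hδ0 hδ1 j t) (exp_pos _)).le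
  rw [h.succ]
  fin_cases c <;> simp only [Fin.zero_eta, Fin.mk_one] <;> nlinarith [hv 0, hv 1]

theorem pow_mul_exp_mul_le (h : IsFixedShare η δ l α) (hδ0 : 0 ≤ δ) (hδ1 : δ ≤ 1) (c : Fin 2)
    {a b : ℕ} (hab : a ≤ b) :
    (1 - δ / 2) ^ (b - a) * exp (-η * ∑ t ∈ Ioc a b, l c t) * α c a ≤ α c b := by
  induction b, hab using Nat.le_induction with
  | base => simp
  | succ b hab ih =>
    calc (1 - δ / 2) ^ (b + 1 - a) * exp (-η * ∑ t ∈ Ioc a (b + 1), l c t) * α c a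
        = (1 - δ / 2) * (((1 - δ / 2) ^ (b - a) * exp (-η * ∑ t ∈ Ioc a b, l c t) * α c a)
            * exp (-η * l c (b + 1))) := by
          rw [sum_Ioc_succ_top hab, Nat.sub_add_comm hab, pow_succ, mul_add, exp_add]; ring
      _ ≤ (1 - δ / 2) * (α c b * exp (-η * l c (b + 1))) := by
          gcongr; linarith
      _ ≤ α c (b + 1) := h.one_sub_div_two_mul_le_succ hδ0 hδ1 c b

theorem mul_exp_le_of_switch (h : IsFixedShare η δ l α) (hδ0 : 0 ≤ δ) (hδ1 : δ ≤ 1)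
    (a b : Fin 2) {s T : ℕ} (hs : 1 ≤ s) (hsT : s ≤ T) :
    δ / 4 * (1 - δ / 2) ^ (T - 1)
        * exp (-η * (∑ t ∈ Ioc 0 s, l a t + ∑ t ∈ Ioc s T, l b t)) ≤ α b T := by
  obtain ⟨r, rfl⟩ : ∃ r, s = r + 1 := ⟨s - 1, by omega⟩
  have hκ : 0 ≤ 1 - δ / 2 := by linarith
  have before := h.pow_mul_exp_mul_le hδ0 hδ1 a (Nat.zero_le r)
  have after := h.pow_mul_exp_mul_le hδ0 hδ1 b hsT
  rw [h.init, Nat.sub_zero] at before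
  calc δ / 4 * (1 - δ / 2) ^ (T - 1)
        * exp (-η * (∑ t ∈ Ioc 0 (r + 1), l a t + ∑ t ∈ Ioc (r + 1) T, l b t))
      = (1 - δ / 2) ^ (T - (r + 1)) * exp (-η * ∑ t ∈ Ioc (r + 1) T, l b t)
          * (δ / 2 * (((1 - δ / 2) ^ r * exp (-η * ∑ t ∈ Ioc 0 r, l a t) * (1 / 2))
            * exp (-η * l a (r + 1)))) := by
        rw [sum_Ioc_succ_top (Nat.zero_le r), show T - 1 = r + (T - (r + 1)) by omega, pow_add]
        simp only [mul_add, exp_add]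
        ring
    _ ≤ (1 - δ / 2) ^ (T - (r + 1)) * exp (-η * ∑ t ∈ Ioc (r + 1) T, l b t)
          * (δ / 2 * (α a r * exp (-η * l a (r + 1)))) := by gcongr
    _ ≤ (1 - δ / 2) ^ (T - (r + 1)) * exp (-η * ∑ t ∈ Ioc (r + 1) T, l b t)
          * α b (r + 1) := by
        gcongr; exact h.div_two_mul_le_succ hδ0 hδ1 a b r
    _ ≤ α b T := after

theorem log_add_le (h : IsFixedShare η δ l α) (hδ0 : 0 ≤ δ) (hδ1 : δ ≤ 1)
    (hl : ∀ c t, l c t ∈ Set.Icc (0 : ℝ) 1) (n : ℕ) :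
    log (α 0 n + α 1 n) ≤
      -η * ∑ t ∈ Icc 1 n,
          (α 0 (t - 1) * l 0 t + α 1 (t - 1) * l 1 t) / (α 0 (t - 1) + α 1 (t - 1))
        + η ^ 2 / 8 * n := by
  induction n with
  | zero => norm_num [h.init]
  | succ n ih =>
    have h0 := h.pos hδ0 hδ1 0 n
    have h1 := h.pos hδ0 hδ1 1 n
    set W := α 0 n + α 1 n
    have hW : 0 < W := add_pos h0 h1
    have hoeffding := log_sum_mul_exp_le (p := fun c ↦ α c n / W) (x := fun c ↦ l c (n + 1))
      (fun c ↦ (div_pos (h.pos hδ0 hδ1 c n) hW).le)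
      (by simp [Fin.sum_univ_two, ← add_div, W, hW.ne'])
      (fun c ↦ hl c (n + 1)) (-η)
    simp only [Fin.sum_univ_two, sub_zero, one_pow, mul_one] at hoeffding
    have hratio : α 0 n / W * exp (-η * l 0 (n + 1)) + α 1 n / W * exp (-η * l 1 (n + 1))
        = (α 0 (n + 1) + α 1 (n + 1)) / W := by
      rw [h.add_succ]; ring
    have hmean : α 0 n / W * l 0 (n + 1) + α 1 n / W * l 1 (n + 1)
        = (α 0 n * l 0 (n + 1) + α 1 n * l 1 (n + 1)) / W := by ring
    rw [hratio, hmean, log_div (add_pos (h.pos hδ0 hδ1 0 _) (h.pos hδ0 hδ1 1 _)).ne' hW.ne']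
      at hoeffding
    rw [sum_Icc_succ_top (by omega), Nat.add_sub_cancel]
    push_cast
    linarith

theorem mul_exp_le_add (h : IsFixedShare η δ l α) (hδ0 : 0 ≤ δ) (hδ1 : δ ≤ 1) {T : ℕ}
    (hT : 1 ≤ T) {i : ℕ → Fin 2} (hi : SwitchesAtMostOnce T i) :
    δ / 8 * (1 - δ) ^ (T - 2) * exp (-η * ∑ t ∈ Icc 1 T, l (i t) t) ≤ α 0 T + α 1 T := by
  obtain ⟨s, hs, hsT, hsplit⟩ := hi.exists_sum_eq hT l
  calc _ ≤ δ / 4 * (1 - δ / 2) ^ (T - 1) * exp (-η * ∑ t ∈ Icc 1 T, l (i t) t) := by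
        exact mul_le_mul_of_nonneg_right (div_eight_mul_pow_le hδ0 hδ1 T) (exp_pos _).le
    _ ≤ α (i T) T := by rw [hsplit]; exact h.mul_exp_le_of_switch hδ0 hδ1 (i 1) (i T) hs hsT
    _ ≤ α 0 T + α 1 T := by
      simpa [Fin.sum_univ_two] using
        single_le_sum (fun c _ ↦ (h.pos hδ0 hδ1 c T).le) (mem_univ (i T))

end IsFixedShare

/-- **Theorem 4 (Theorem 5.2: fixed-share tracking bound).** For `T₂ ≥ 2`,
`η > 0`, `δ ∈ (0,1)`, and any action sequence `(i_1,…,i_{T₂}) ∈ {1,2}^{T₂}`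
with at most one switch, the fixed-share forecaster satisfies
`Σ_t ℓ̄_t − Σ_t ℓ_{i_t,t}
  ≤ (2/η) ln 2 + (1/η) ln (1/((δ/2)(1−δ)^{T₂−2})) + (η/8) T₂`. -/
theorem fixed_share_tracking_bound
    (T : ℕ) (hT : 2 ≤ T) (η δ : ℝ) (hη : 0 < η) (hδ : δ ∈ Set.Ioo (0 : ℝ) 1)
    (l : Fin 2 → ℕ → ℝ) (hl : ∀ i t, l i t ∈ Set.Icc (0 : ℝ) 1)
    (α v : Fin 2 → ℕ → ℝ)
    (hα0 : ∀ i, α i 0 = 1 / 2)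
    (hv : ∀ i t, 1 ≤ t → v i t = α i (t - 1) * Real.exp (-η * l i t))
    (hαt : ∀ i t, 1 ≤ t → α i t = δ * (v 0 t + v 1 t) / 2 + (1 - δ) * v i t)
    (i : ℕ → Fin 2)
    (hswitch : ∃ s ≤ T,
      (∀ t1 t2, 1 ≤ t1 → t1 ≤ s → 1 ≤ t2 → t2 ≤ s → i t1 = i t2) ∧
      (∀ t1 t2, s < t1 → t1 ≤ T → s < t2 → t2 ≤ T → i t1 = i t2)) :
    (∑ t ∈ Finset.Icc 1 T,
        (α 0 (t - 1) * l 0 t + α 1 (t - 1) * l 1 t) / (α 0 (t - 1) + α 1 (t - 1)))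
      - ∑ t ∈ Finset.Icc 1 T, l (i t) t
      ≤ (2 / η) * Real.log 2
        + (1 / η) * Real.log (1 / ((δ / 2) * (1 - δ) ^ (T - 2)))
        + (η / 8) * T := by
  obtain ⟨hδpos, hδlt⟩ := hδ
  have hfs : IsFixedShare η δ l α := ⟨hα0, fun c t ↦ by
    simp only [hαt c (t + 1) (by omega), hv _ (t + 1) (by omega), Nat.add_sub_cancel]; ring⟩
  have hq : 0 < δ / 2 * (1 - δ) ^ (T - 2) := mul_pos (by positivity) (pow_pos (sub_pos.2 hδlt) _)
  have hC : δ / 8 * (1 - δ) ^ (T - 2) = δ / 2 * (1 - δ) ^ (T - 2) / 2 ^ 2 := by ring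
  have hlog := (log_le_log (by rw [hC]; exact mul_pos (div_pos hq (by norm_num)) (exp_pos _))
    (hfs.mul_exp_le_add hδpos.le hδlt.le (by omega) hswitch)).trans
    (hfs.log_add_le hδpos.le hδlt.le hl T)
  rw [hC, log_mul (div_pos hq (by norm_num)).ne' (exp_pos _).ne', log_exp,
    log_div hq.ne' (by norm_num), log_pow, Nat.cast_ofNat] at hlog
  have hrhs : 2 / η * log 2 + 1 / η * log (1 / (δ / 2 * (1 - δ) ^ (T - 2))) + η / 8 * T =
      (2 * log 2 - log (δ / 2 * (1 - δ) ^ (T - 2)) + η ^ 2 / 8 * T) / η := by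
    rw [one_div (δ / 2 * _), log_inv]
    field_simp
    ring
  rw [hrhs, le_div_iff₀ hη]
  linarith
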